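/- Under the hypotheses of the key recursion for smooth ALPHA with the accelerated stepsizes θ₀ ∈ (0,1], θ_{k+1} = (√(θ_k⁴+4θ_k²)−θ_k²)/2, for any y ∈ R^n such that C := (1−θ₀)(f(x₀)−f(y)) + (θ₀²/2)‖x₀−y‖²_{v∘p^{-2}} ≥ 0, the iterates satisfy for all k ≥ 1: E[f(x_k)] − f(y) ≤ 4C/((k−1)θ₀ + 2)². -/

import Mathlib

open Finset

noncomputable def Ehist (n k : ℕ) (μ : Finset (Fin n) → ℝ)
    (φ : (ℕ → Finset (Fin n)) → ℝ) : ℝ :=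
  ∑ h : Fin k → Finset (Fin n),
    (∏ j, μ (h j)) * φ (fun j => if hj : j < k then h ⟨j, hj⟩ else ∅)

lemma Ehist_succ (n k : ℕ) (μ : Finset (Fin n) → ℝ) (φ : (ℕ → Finset (Fin n)) → ℝ) :
    Ehist n (k+1) μ φ = ∑ S : Finset (Fin n), μ S *
      Ehist n k μ (fun ω => φ (fun j => if j = k then S else ω j)) := by
  unfold Ehist
  rw [← Equiv.sum_comp (Fin.snocEquiv (fun _ => Finset (Fin n)))]
  rw [Fintype.sum_prod_type]
  refine Finset.sum_congr rfl (fun S _ => ?_)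
  rw [Finset.mul_sum]
  refine Finset.sum_congr rfl (fun h _ => ?_)
  have hprod : ∏ j : Fin (k+1), μ ((Fin.snocEquiv (fun _ => Finset (Fin n))) (S, h) j)
      = μ S * ∏ j : Fin k, μ (h j) := by
    rw [Fin.prod_univ_castSucc]
    simp [Fin.snocEquiv, mul_comm]
  rw [hprod, mul_assoc]
  beta_reduce
  congr 1
  congr 1
  refine congrArg φ (funext fun j => ?_)
  by_cases hj : j < k + 1
  · simp only [dif_pos hj]
    rcases Nat.lt_succ_iff_lt_or_eq.1 hj with h' | h'
    · have : j ≠ k := Nat.ne_of_lt h'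
      simp only [if_neg this, dif_pos h']
      exact @Fin.snoc_castSucc k (fun _ => Finset (Fin n)) S h ⟨j, h'⟩
    · subst h'
      simp only [if_pos rfl]
      exact @Fin.snoc_last j (fun _ => Finset (Fin n)) S h
  · have h1 : j ≠ k := fun h' => hj (h' ▸ Nat.lt_succ_self k)
    have h2 : ¬ j < k := fun h' => hj (Nat.lt_succ_of_lt h')
    simp [hj, h1, h2]

lemma Ehist_mono (n k : ℕ) (μ : Finset (Fin n) → ℝ) (hμ0 : ∀ S, 0 ≤ μ S)
    (φ ψ : (ℕ → Finset (Fin n)) → ℝ) (h : ∀ ω, φ ω ≤ ψ ω) :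
    Ehist n k μ φ ≤ Ehist n k μ ψ := by
  refine Finset.sum_le_sum fun i _ => ?_
  exact mul_le_mul_of_nonneg_left (h _) (Finset.prod_nonneg fun j _ => hμ0 _)

lemma Ehist_smul (n k : ℕ) (μ : Finset (Fin n) → ℝ) (c : ℝ)
    (φ : (ℕ → Finset (Fin n)) → ℝ) :
    Ehist n k μ (fun ω => c * φ ω) = c * Ehist n k μ φ := by
  unfold Ehist; rw [Finset.mul_sum]; exact Finset.sum_congr rfl fun h _ => by ring

lemma Ehist_sum (n k : ℕ) (μ : Finset (Fin n) → ℝ) {ι : Type*} [Fintype ι]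
    (F : ι → (ℕ → Finset (Fin n)) → ℝ) :
    ∑ S : ι, Ehist n k μ (F S) = Ehist n k μ (fun ω => ∑ S : ι, F S ω) := by
  unfold Ehist
  rw [Finset.sum_comm]
  exact Finset.sum_congr rfl fun h _ => by rw [Finset.mul_sum]

lemma Ehist_congr (n k : ℕ) (μ : Finset (Fin n) → ℝ)
    (φ ψ : (ℕ → Finset (Fin n)) → ℝ) (h : ∀ ω, φ ω = ψ ω) :
    Ehist n k μ φ = Ehist n k μ ψ := by
  unfold Ehist; exact Finset.sum_congr rfl fun i _ => by rw [h]

lemma Ehist_zero_eval (n : ℕ) (μ : Finset (Fin n) → ℝ)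
    (φ : (ℕ → Finset (Fin n)) → ℝ) :
    Ehist n 0 μ φ = φ (fun _ => ∅) := by
  unfold Ehist
  rw [Fintype.sum_eq_single (fun i : Fin 0 => (∅ : Finset (Fin n)))]
  · simp
  · intro h hne; exact absurd (funext fun i => i.elim0) hne

lemma Ehist_one (n k : ℕ) (μ : Finset (Fin n) → ℝ)
    (hμ1 : ∑ S : Finset (Fin n), μ S = 1) :
    Ehist n k μ (fun _ => 1) = 1 := by
  induction k with
  | zero => rw [Ehist_zero_eval]
  | succ k ih =>
    rw [Ehist_succ]
    simp only [ih, mul_one, hμ1]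

lemma Ehist_sub_const (n k : ℕ) (μ : Finset (Fin n) → ℝ)
    (hμ1 : ∑ S : Finset (Fin n), μ S = 1)
    (φ : (ℕ → Finset (Fin n)) → ℝ) (c : ℝ) :
    Ehist n k μ (fun ω => φ ω - c) = Ehist n k μ φ - c := by
  have h1 := Ehist_one n k μ hμ1
  unfold Ehist at *
  simp only [mul_sub, Finset.sum_sub_distrib, ← Finset.sum_mul]
  simp only [mul_one] at h1
  rw [h1, one_mul]


lemma theta_step (t t' : ℝ) (ht : 0 < t)
    (h : t' = (Real.sqrt (t^4 + 4*t^2) - t^2)/2) :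
    0 < t' ∧ t'^2 = t^2 * (1 - t') ∧ t' ≤ t ∧ t' < 1 ∧ 2*(t - t') ≥ t * t' := by
  have hnn : (0:ℝ) ≤ t^4 + 4*t^2 := by positivity
  have hs : Real.sqrt (t^4 + 4*t^2) ^ 2 = t^4 + 4*t^2 := Real.sq_sqrt hnn
  have hs0 : 0 ≤ Real.sqrt (t^4 + 4*t^2) := Real.sqrt_nonneg _
  have hgt : t^2 < Real.sqrt (t^4 + 4*t^2) := by nlinarith [hs, hs0, sq_nonneg t]
  have hpos : 0 < t' := by rw [h]; linarith
  have hid : t'^2 = t^2 * (1 - t') := by rw [h]; linear_combination hs/4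
  have hle : t' ≤ t := by nlinarith [hid, hpos, ht]
  have hlt : t' < 1 := by nlinarith [hid, hpos, ht]
  refine ⟨hpos, hid, hle, hlt, ?_⟩
  nlinarith [hid, hle, hpos, ht, mul_pos ht hpos]

lemma one_step (n : ℕ) (μ : Finset (Fin n) → ℝ)
    (hμ0 : ∀ S, 0 ≤ μ S) (hμ1 : ∑ S : Finset (Fin n), μ S = 1)
    (p : Fin n → ℝ)
    (hpdef : ∀ i, p i = ∑ S : Finset (Fin n), if i ∈ S then μ S else 0)
    (hp0 : ∀ i, 0 < p i)
    (v : Fin n → ℝ) (hv : ∀ i, 0 < v i)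
    (f : (Fin n → ℝ) → ℝ) (g : (Fin n → ℝ) → (Fin n → ℝ))
    (hconv : ∀ x y : Fin n → ℝ, f x + ∑ i, g x i * (y i - x i) ≤ f y)
    (heso : ∀ x h : Fin n → ℝ,
      (∑ S : Finset (Fin n), μ S * f (x + fun i => if i ∈ S then h i else 0))
        ≤ f x + (∑ i, p i * g x i * h i) + (1/2) * ∑ i, v i * p i * (h i)^2)
    (t : ℝ) (ht0 : 0 < t) (ht1 : t ≤ 1)
    (y x z w : Fin n → ℝ) (hw : ∀ i, w i = (1-t)*x i + t*z i)
    (x' z' : Finset (Fin n) → (Fin n → ℝ))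
    (hz' : ∀ S i, z' S i = if i ∈ S then z i - (p i/(v i * t)) * g w i else z i)
    (hx' : ∀ S i, x' S i = w i + (t/p i)*(z' S i - z i)) :
    ∑ S : Finset (Fin n), μ S *
        ((f (x' S) - f y) + t^2/2 * ∑ i, (v i/(p i)^2)*(z' S i - y i)^2)
      ≤ (1-t)*(f x - f y) + t^2/2 * ∑ i, (v i/(p i)^2)*(z i - y i)^2 := by
  set gk := g w with hgk
  -- x' S = w + indicator step
  have hx'' : ∀ S, x' S = w + fun i => if i ∈ S then -gk i / v i else 0 := by
    intro S
    funext i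
    rw [hx' S i, hz' S i]
    by_cases hi : i ∈ S
    · simp only [hi, if_true, Pi.add_apply]
      have hpne := (hp0 i).ne'
      have hvne := (hv i).ne'
      field_simp
      ring
    · simp [hi]
  -- abbreviations
  set S1 := ∑ i, (p i / v i) * gk i ^ 2 with hS1
  set S2 := ∑ i, gk i * (z i - y i) with hS2
  set Nz := ∑ i, (v i/(p i)^2)*(z i - y i)^2 with hNz
  -- (a) ESO bound
  have ha : ∑ S : Finset (Fin n), μ S * f (x' S) ≤ f w - (1/2) * S1 := by
    have h1 := heso w (fun i => -gk i / v i)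
    have e1 : ∑ i, p i * gk i * (-gk i / v i) = -S1 := by
      rw [hS1, ← Finset.sum_neg_distrib]
      refine Finset.sum_congr rfl fun i _ => ?_
      have hvne := (hv i).ne'
      field_simp
    have e2 : ∑ i, v i * p i * (-gk i / v i)^2 = S1 := by
      rw [hS1]
      refine Finset.sum_congr rfl fun i _ => ?_
      have hvne := (hv i).ne'
      field_simp
    rw [e1, e2] at h1
    calc ∑ S : Finset (Fin n), μ S * f (x' S)
        = ∑ S : Finset (Fin n), μ S * f (w + fun i => if i ∈ S then (-gk i / v i) else 0) := by
          refine Finset.sum_congr rfl fun S _ => ?_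
          rw [hx'' S]
      _ ≤ f w + (-S1) + (1/2) * S1 := h1
      _ = f w - (1/2) * S1 := by ring
  -- (b) norm expectation identity
  have hb : ∑ S : Finset (Fin n), μ S * ∑ i, (v i/(p i)^2)*(z' S i - y i)^2
      = Nz - (2/t)*S2 + (1/t^2)*S1 := by
    have swap : ∑ S : Finset (Fin n), μ S * ∑ i, (v i/(p i)^2)*(z' S i - y i)^2
        = ∑ i, ∑ S : Finset (Fin n), μ S * ((v i/(p i)^2)*(z' S i - y i)^2) := by
      simp only [Finset.mul_sum]
      exact Finset.sum_comm
    rw [swap]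
    have per : ∀ i : Fin n, ∑ S : Finset (Fin n), μ S * ((v i/(p i)^2)*(z' S i - y i)^2)
        = (v i/(p i)^2)*(z i - y i)^2 - (2/t)*(gk i * (z i - y i))
          + (1/t^2)*((p i / v i) * gk i ^ 2) := by
      intro i
      have step : ∀ S : Finset (Fin n), μ S * ((v i/(p i)^2)*(z' S i - y i)^2)
          = μ S * ((v i/(p i)^2)*(z i - y i)^2)
            + (if i ∈ S then μ S else 0) *
              ((v i/(p i)^2)*((z i - (p i/(v i * t)) * gk i - y i)^2 - (z i - y i)^2)) := by
        intro S
        rw [hz' S i]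
        by_cases hi : i ∈ S
        · simp only [hi, if_true]; ring
        · simp only [hi, if_false]; ring
      rw [Finset.sum_congr rfl (fun S _ => step S)]
      rw [Finset.sum_add_distrib, ← Finset.sum_mul, ← Finset.sum_mul, hμ1, ← hpdef i]
      have hpne := (hp0 i).ne'
      have hvne := (hv i).ne'
      have htne := ht0.ne'
      field_simp
      ring
    rw [Finset.sum_congr rfl (fun i _ => per i), hS1, hS2, hNz]
    rw [Finset.sum_add_distrib, Finset.sum_sub_distrib, ← Finset.mul_sum, ← Finset.mul_sum]
  -- (c) convexity
  have hc : f w - t * S2 ≤ (1-t)*(f x) + t*(f y) := by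
    have h1 := hconv w x
    have h2 := hconv w y
    have comb : (1-t) * (∑ i, gk i * (x i - w i)) + t * (∑ i, gk i * (y i - w i))
        = -t * S2 := by
      calc (1-t) * (∑ i, gk i * (x i - w i)) + t * (∑ i, gk i * (y i - w i))
          = ∑ i, ((1-t)*(gk i * (x i - w i)) + t*(gk i * (y i - w i))) := by
            rw [Finset.mul_sum, Finset.mul_sum, ← Finset.sum_add_distrib]
        _ = ∑ i, -t*(gk i * (z i - y i)) := by
            refine Finset.sum_congr rfl fun i _ => ?_
            rw [hw i]; ring
        _ = -t * S2 := by rw [hS2, Finset.mul_sum]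
    nlinarith [mul_le_mul_of_nonneg_left h1 (by linarith : (0:ℝ) ≤ 1 - t),
      mul_le_mul_of_nonneg_left h2 (le_of_lt ht0), comb]
  -- (d) split LHS
  have hd : ∑ S : Finset (Fin n), μ S *
        ((f (x' S) - f y) + t^2/2 * ∑ i, (v i/(p i)^2)*(z' S i - y i)^2)
      = (∑ S : Finset (Fin n), μ S * f (x' S)) - f y
        + t^2/2 * ∑ S : Finset (Fin n), μ S * ∑ i, (v i/(p i)^2)*(z' S i - y i)^2 := by
    have e3 : ∀ S : Finset (Fin n), μ S *
          ((f (x' S) - f y) + t^2/2 * ∑ i, (v i/(p i)^2)*(z' S i - y i)^2)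
        = μ S * f (x' S) - μ S * f y
          + (t^2/2) * (μ S * ∑ i, (v i/(p i)^2)*(z' S i - y i)^2) := fun S => by ring
    rw [Finset.sum_congr rfl fun S _ => e3 S, Finset.sum_add_distrib,
      Finset.sum_sub_distrib, ← Finset.sum_mul, hμ1, one_mul, ← Finset.mul_sum]
  rw [hd, hb]
  have e4 : t^2/2 * (Nz - (2/t)*S2 + (1/t^2)*S1) = t^2/2*Nz - t*S2 + (1/2)*S1 := by
    have htne := ht0.ne'
    field_simp
  linarith [ha, hc, e4]

/-- Theorem 3.2 (ALPHA, smooth & accelerated): with the accelerated stepsizes,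
`E[f(x_k)] − f(y) ≤ 4C/((k−1)θ₀+2)²` whenever `C ≥ 0`. -/
theorem alpha_smooth_accelerated (n : ℕ) (μ : Finset (Fin n) → ℝ)
    (hμ0 : ∀ S, 0 ≤ μ S) (hμ1 : ∑ S : Finset (Fin n), μ S = 1)
    (p : Fin n → ℝ)
    (hpdef : ∀ i, p i = ∑ S : Finset (Fin n), if i ∈ S then μ S else 0)
    (hp0 : ∀ i, 0 < p i)
    (v : Fin n → ℝ) (hv : ∀ i, 0 < v i)
    (f : (Fin n → ℝ) → ℝ) (g : (Fin n → ℝ) → (Fin n → ℝ))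
    (hconv : ∀ x y : Fin n → ℝ, f x + ∑ i, g x i * (y i - x i) ≤ f y)
    (heso : ∀ x h : Fin n → ℝ,
      (∑ S : Finset (Fin n), μ S * f (x + fun i => if i ∈ S then h i else 0))
        ≤ f x + (∑ i, p i * g x i * h i) + (1/2) * ∑ i, v i * p i * (h i)^2)
    (θ : ℕ → ℝ) (hθ0 : 0 < θ 0) (hθ1 : θ 0 ≤ 1)
    (hθrec : ∀ k, θ (k+1) = (Real.sqrt ((θ k)^4 + 4*(θ k)^2) - (θ k)^2)/2)
    (x0 : Fin n → ℝ)
    (X Z : ℕ → (ℕ → Finset (Fin n)) → (Fin n → ℝ))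
    (hadapt : ∀ k (ω ω' : ℕ → Finset (Fin n)), (∀ j < k, ω j = ω' j) →
      X k ω = X k ω' ∧ Z k ω = Z k ω')
    (hX0 : ∀ ω, X 0 ω = x0) (hZ0 : ∀ ω, Z 0 ω = x0)
    (hZ : ∀ k ω i, Z (k+1) ω i =
      if i ∈ ω k then
        Z k ω i - (p i/(v i * θ k)) * g (fun j => (1-θ k)*X k ω j + θ k*Z k ω j) i
      else Z k ω i)
    (hX : ∀ k ω i, X (k+1) ω i =
      ((1-θ k)*X k ω i + θ k*Z k ω i) + (θ k/p i)*(Z (k+1) ω i - Z k ω i))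
    (y : Fin n → ℝ)
    (C : ℝ)
    (hC : C = (1-θ 0)*(f x0 - f y) + (θ 0)^2/2 * ∑ i, (v i/(p i)^2)*(x0 i - y i)^2)
    (hC0 : 0 ≤ C) :
    ∀ k : ℕ, 1 ≤ k →
      Ehist n k μ (fun ω => f (X k ω)) - f y ≤ 4*C/(((k:ℝ)-1)*θ 0 + 2)^2 := by
  -- theta properties
  have hθprop : ∀ k, 0 < θ k ∧ θ k ≤ 1 := by
    intro k
    induction k with
    | zero => exact ⟨hθ0, hθ1⟩
    | succ k ih =>
      obtain ⟨hp', _, _, hlt, _⟩ := theta_step (θ k) (θ (k+1)) ih.1 (hθrec k)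
      exact ⟨hp', le_of_lt hlt⟩
  have hid : ∀ k, (θ (k+1))^2 = (θ k)^2 * (1 - θ (k+1)) :=
    fun k => (theta_step (θ k) (θ (k+1)) (hθprop k).1 (hθrec k)).2.1
  have hlt1 : ∀ k, θ (k+1) < 1 :=
    fun k => (theta_step (θ k) (θ (k+1)) (hθprop k).1 (hθrec k)).2.2.2.1
  have hhalf : ∀ k, 2*(θ k - θ (k+1)) ≥ θ k * θ (k+1) :=
    fun k => (theta_step (θ k) (θ (k+1)) (hθprop k).1 (hθrec k)).2.2.2.2
  -- stepsize bound
  have hbound : ∀ k : ℕ, θ k * ((k:ℝ)*θ 0 + 2) ≤ 2*θ 0 := by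
    intro k
    induction k with
    | zero => push_cast; nlinarith [hθ0]
    | succ k ih =>
      have h1 := hhalf k
      have h2 := (hθprop k).1
      have h3 := (hθprop (k+1)).1
      have hA : θ (k+1) * (2 + θ k) ≤ 2 * θ k := by nlinarith
      have hL : (0:ℝ) ≤ (k:ℝ)*θ 0 + 2 + θ 0 := by positivity
      have hB := mul_le_mul_of_nonneg_right hA hL
      have hCc : 2*θ k*(((k:ℝ)*θ 0+2)+θ 0) ≤ 2*θ 0*(2+θ k) := by nlinarith [ih]
      have hD : θ (k+1)*((((k:ℝ)*θ 0+2)+θ 0))*(2+θ k) ≤ 2*θ 0*(2+θ k) := by nlinarith [hB, hCc]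
      have hE := le_of_mul_le_mul_right hD (by linarith : (0:ℝ) < 2+θ k)
      push_cast
      nlinarith [hE]
  -- key one-step recursion in expectation
  have hstep : ∀ k : ℕ,
      Ehist n (k+1) μ (fun ω => (f (X (k+1) ω) - f y)
          + (θ k)^2/2 * ∑ i, (v i/(p i)^2)*(Z (k+1) ω i - y i)^2)
        ≤ Ehist n k μ (fun ω => (1-θ k)*(f (X k ω) - f y)
          + (θ k)^2/2 * ∑ i, (v i/(p i)^2)*(Z k ω i - y i)^2) := by
    intro k
    rw [Ehist_succ]
    have hrw : ∀ S : Finset (Fin n), μ S * Ehist n k μ (fun ω =>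
        (fun ω' => (f (X (k+1) ω') - f y)
          + (θ k)^2/2 * ∑ i, (v i/(p i)^2)*(Z (k+1) ω' i - y i)^2)
        (fun j => if j = k then S else ω j))
        = Ehist n k μ (fun ω => μ S * ((f (X (k+1) (fun j => if j = k then S else ω j)) - f y)
          + (θ k)^2/2 * ∑ i, (v i/(p i)^2)*(Z (k+1) (fun j => if j = k then S else ω j) i - y i)^2)) :=
      fun S => (Ehist_smul n k μ (μ S) _).symm
    rw [Finset.sum_congr rfl fun S _ => hrw S, Ehist_sum]
    refine Ehist_mono n k μ hμ0 _ _ fun ω => ?_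
    -- pointwise one-step inequality
    have hω : ∀ S : Finset (Fin n), (∀ j < k, (fun j => if j = k then S else ω j) j = ω j) := by
      intro S j hj
      simp [Nat.ne_of_lt hj]
    have hXe : ∀ S, X k (fun j => if j = k then S else ω j) = X k ω :=
      fun S => (hadapt k _ ω (hω S)).1
    have hZe : ∀ S, Z k (fun j => if j = k then S else ω j) = Z k ω :=
      fun S => (hadapt k _ ω (hω S)).2
    refine one_step n μ hμ0 hμ1 p hpdef hp0 v hv f g hconv heso (θ k)
      (hθprop k).1 (hθprop k).2 y (X k ω) (Z k ω)
      (fun i => (1-θ k)*X k ω i + θ k*Z k ω i) (fun i => rfl)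
      (fun S => X (k+1) (fun j => if j = k then S else ω j))
      (fun S => Z (k+1) (fun j => if j = k then S else ω j)) ?_ ?_
    · intro S i
      show Z (k+1) (fun j => if j = k then S else ω j) i = _
      rw [hZ k _ i, hXe S, hZe S]
      simp
    · intro S i
      show X (k+1) (fun j => if j = k then S else ω j) i = _
      rw [hX k _ i, hXe S, hZe S]
  -- Lyapunov decay
  have hA : ∀ k : ℕ, Ehist n k μ (fun ω => (1-θ k)*(f (X k ω) - f y)
      + (θ k)^2/2 * ∑ i, (v i/(p i)^2)*(Z k ω i - y i)^2) ≤ (θ k)^2/(θ 0)^2 * C := by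
    intro k
    induction k with
    | zero =>
      rw [Ehist_zero_eval, hX0, hZ0]
      rw [div_self (by positivity : ((θ 0)^2 : ℝ) ≠ 0), one_mul, hC]
    | succ k ih =>
      have e1 : Ehist n (k+1) μ (fun ω => (1-θ (k+1))*(f (X (k+1) ω) - f y)
          + (θ (k+1))^2/2 * ∑ i, (v i/(p i)^2)*(Z (k+1) ω i - y i)^2)
          = (1-θ (k+1)) * Ehist n (k+1) μ (fun ω => (f (X (k+1) ω) - f y)
          + (θ k)^2/2 * ∑ i, (v i/(p i)^2)*(Z (k+1) ω i - y i)^2) := by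
        rw [← Ehist_smul]
        refine Ehist_congr n (k+1) μ _ _ fun ω => ?_
        beta_reduce
        linear_combination ((∑ i, (v i/(p i)^2)*(Z (k+1) ω i - y i)^2)/2) * hid k
      rw [e1]
      have h1 : (0:ℝ) ≤ 1 - θ (k+1) := by linarith [hlt1 k]
      calc (1-θ (k+1)) * Ehist n (k+1) μ _
          ≤ (1-θ (k+1)) * Ehist n k μ (fun ω => (1-θ k)*(f (X k ω) - f y)
            + (θ k)^2/2 * ∑ i, (v i/(p i)^2)*(Z k ω i - y i)^2) :=
            mul_le_mul_of_nonneg_left (hstep k) h1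
        _ ≤ (1-θ (k+1)) * ((θ k)^2/(θ 0)^2 * C) := mul_le_mul_of_nonneg_left ih h1
        _ = (θ (k+1))^2/(θ 0)^2 * C := by
            linear_combination (-(C/(θ 0)^2)) * hid k
  -- final bound
  intro k hk
  obtain ⟨m, rfl⟩ : ∃ m, k = m + 1 := ⟨k-1, (Nat.succ_pred_eq_of_pos hk).symm⟩
  have hsub : Ehist n (m+1) μ (fun ω => f (X (m+1) ω) - f y)
      = Ehist n (m+1) μ (fun ω => f (X (m+1) ω)) - f y :=
    Ehist_sub_const n (m+1) μ hμ1 (fun ω => f (X (m+1) ω)) (f y)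
  rw [← hsub]
  have hmono : Ehist n (m+1) μ (fun ω => f (X (m+1) ω) - f y)
      ≤ Ehist n (m+1) μ (fun ω => (f (X (m+1) ω) - f y)
        + (θ m)^2/2 * ∑ i, (v i/(p i)^2)*(Z (m+1) ω i - y i)^2) := by
    refine Ehist_mono n (m+1) μ hμ0 _ _ fun ω => ?_
    have hnn : (0:ℝ) ≤ ∑ i, (v i/(p i)^2)*(Z (m+1) ω i - y i)^2 :=
      Finset.sum_nonneg fun i _ =>
        mul_nonneg (div_nonneg (hv i).le (sq_nonneg _)) (sq_nonneg _)
    beta_reduce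
    have : (0:ℝ) ≤ (θ m)^2/2 * ∑ i, (v i/(p i)^2)*(Z (m+1) ω i - y i)^2 :=
      mul_nonneg (by positivity) hnn
    linarith
  have hchain := le_trans hmono (le_trans (hstep m) (hA m))
  have hcast : ((((m:ℕ)+1:ℕ)):ℝ) - 1 = (m:ℝ) := by push_cast; ring
  rw [hcast]
  have hDpos : (0:ℝ) < (m:ℝ)*θ 0 + 2 := by positivity
  have hsq : (θ m)^2 * ((m:ℝ)*θ 0 + 2)^2 ≤ 4 * (θ 0)^2 := by
    have h1 : (0:ℝ) ≤ θ m * ((m:ℝ)*θ 0 + 2) :=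
      mul_nonneg (hθprop m).1.le hDpos.le
    have h2 := mul_self_le_mul_self h1 (hbound m)
    nlinarith [h2]
  have hfin : (θ m)^2/(θ 0)^2 * C ≤ 4*C/((m:ℝ)*θ 0 + 2)^2 := by
    rw [div_mul_eq_mul_div, div_le_div_iff₀ (by positivity) (by positivity)]
    nlinarith [hsq, hC0, mul_nonneg hC0 (sq_nonneg (θ 0))]
  linarith [hchain, hfin]
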